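/- Let A ⊆ B be an extension of integral domains such that the conductor (A : B) = {x : xB ⊆ A} is nonzero. If A is condensed, then B is condensed. -/
import Mathlib


/-- An integral domain is condensed if for every pair of nonzero ideals `I, J`,
the product `I*J` equals the set of products `{i*j : i ∈ I, j ∈ J}`. -/
def IsCondensed (D : Type*) [CommRing D] : Prop :=
  ∀ I J : Ideal D, I ≠ ⊥ → J ≠ ⊥ → ∀ x ∈ I * J, ∃ i ∈ I, ∃ j ∈ J, x = i * j

/-- The ideal of `A` consisting of elements of the form `c * i` with `i ∈ I`. -/
def condIdeal {B : Type*} [CommRing B] (A : Subring B) (c : B)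
    (hc : ∀ b : B, c * b ∈ A) (I : Ideal B) : Ideal A where
  carrier := {a : A | ∃ i ∈ I, (a : B) = c * i}
  add_mem' := by
    rintro a b ⟨i, hi, ha⟩ ⟨j, hj, hb⟩
    exact ⟨i + j, I.add_mem hi hj, by push_cast [ha, hb]; ring⟩
  zero_mem' := ⟨0, I.zero_mem, by simp⟩
  smul_mem' := by
    rintro a ⟨x, hx⟩ ⟨i, hi, hax⟩
    exact ⟨(a : B) * i, I.mul_mem_left _ hi, by
      simp only [smul_eq_mul] at *
      push_cast
      rw [hax]; ring⟩

theorem stmt14 (B : Type*) [CommRing B] [IsDomain B] (A : Subring B)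
    (hcond : ∃ x : B, x ≠ 0 ∧ ∀ b : B, x * b ∈ A)
    (hA : IsCondensed A) : IsCondensed B := by
  obtain ⟨c, hc0, hc⟩ := hcond
  intro I J hI hJ x hx
  set I' := condIdeal A c hc I with hI'def
  set J' := condIdeal A c hc J with hJ'def
  have hI' : I' ≠ ⊥ := by
    obtain ⟨i, hi, hine⟩ := Submodule.exists_mem_ne_zero_of_ne_bot hI
    intro h
    have : (⟨c * i, hc i⟩ : A) ∈ I' := ⟨i, hi, rfl⟩
    rw [h, Ideal.mem_bot] at this
    have : c * i = 0 := congrArg Subtype.val this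
    exact (mul_ne_zero hc0 hine) this
  have hJ' : J' ≠ ⊥ := by
    obtain ⟨j, hj, hjne⟩ := Submodule.exists_mem_ne_zero_of_ne_bot hJ
    intro h
    have : (⟨c * j, hc j⟩ : A) ∈ J' := ⟨j, hj, rfl⟩
    rw [h, Ideal.mem_bot] at this
    have : c * j = 0 := congrArg Subtype.val this
    exact (mul_ne_zero hc0 hjne) this
  -- key: c*(c*x) as element of A lies in I' * J'
  have key : ∀ y ∈ I * J, (⟨c * (c * y), hc _⟩ : A) ∈ I' * J' := by
    intro y hy
    refine Submodule.mul_induction_on hy ?_ ?_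
    · intro i hi j hj
      have : (⟨c * (c * (i * j)), hc _⟩ : A)
          = (⟨c * i, hc i⟩ : A) * (⟨c * j, hc j⟩ : A) := by
        apply Subtype.ext
        push_cast
        ring
      rw [this]
      exact Ideal.mul_mem_mul ⟨i, hi, rfl⟩ ⟨j, hj, rfl⟩
    · intro y z hy hz
      have : (⟨c * (c * (y + z)), hc _⟩ : A)
          = (⟨c * (c * y), hc _⟩ : A) + (⟨c * (c * z), hc _⟩ : A) := by
        apply Subtype.ext
        push_cast
        ring
      rw [this]
      exact Ideal.add_mem _ hy hz
  obtain ⟨i', hi', j', hj', heq⟩ := hA I' J' hI' hJ' _ (key x hx)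
  obtain ⟨i, hi, hieq⟩ := hi'
  obtain ⟨j, hj, hjeq⟩ := hj'
  refine ⟨i, hi, j, hj, ?_⟩
  have : c * (c * x) = c * (c * (i * j)) := by
    have := congrArg (Subtype.val) heq
    simp only [Subring.coe_mul] at this
    rw [hieq, hjeq] at this
    rw [this]; ring
  exact mul_left_cancel₀ hc0 (mul_left_cancel₀ hc0 this)
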